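/- Let f: ℝⁿ → ℝ be differentiable with L-Lipschitz gradient, let g: ℝⁿ → ℝ be convex, and let δ ∈ (0, 1/L). If v = prox_{δg}(x − δ∇f(x)), then (f+g)(x) − (f+g)(v) ≥ (1/(2δ) − L/2)‖v − x‖². -/

import Mathlib

/-!
By the descent lemma, `f v` is at most its linearization at `x` plus `L/2 * ‖v - x‖²`.
Comparing the prox objective at its minimizer `v` with its value at `x` bounds `g v` by
`g x - ⟪∇f x, v - x⟫ - ‖v - x‖² / (2δ)`. Adding the two bounds cancels the inner products.
-/

open InnerProductSpace Set

section

variable {E : Type*} [NormedAddCommGroup E] [InnerProductSpace ℝ E]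

theorem le_add_inner_add_half_mul_sq_of_lipschitz_gradient [CompleteSpace E]
    {f : E → ℝ} {f' : E → E} (hf : ∀ x, HasGradientAt f (f' x) x) {L : ℝ}
    (hLip : ∀ a b, ‖f' a - f' b‖ ≤ L * ‖a - b‖) (x y : E) :
    f y ≤ f x + ⟪f' x, y - x⟫_ℝ + L / 2 * ‖y - x‖ ^ 2 := by
  set d := y - x
  have hφ (t : ℝ) : HasDerivAt (fun t : ℝ => f (x + t • d) - f x - t * ⟪f' x, d⟫_ℝ)
      (⟪f' (x + t • d), d⟫_ℝ - ⟪f' x, d⟫_ℝ) t := by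
    have hline : HasDerivAt (fun t : ℝ => x + t • d) d t := by
      simpa using ((hasDerivAt_id t).smul_const d).const_add x
    have := ((hf (x + t • d)).hasFDerivAt.comp_hasDerivAt t hline).sub_const (f x)
    exact this.fun_sub ((hasDerivAt_id t).mul_const ⟪f' x, d⟫_ℝ) |>.congr_deriv (by simp)
  have hB (t : ℝ) : HasDerivAt (fun t : ℝ => L / 2 * t ^ 2 * ‖d‖ ^ 2) (L * t * ‖d‖ ^ 2) t :=
    (((hasDerivAt_pow 2 t).const_mul (L / 2)).mul_const (‖d‖ ^ 2)).congr_deriv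
      (by push_cast; ring)
  have hbound (t : ℝ) (ht : t ∈ Ico (0 : ℝ) 1) :
      ⟪f' (x + t • d), d⟫_ℝ - ⟪f' x, d⟫_ℝ ≤ L * t * ‖d‖ ^ 2 :=
    calc ⟪f' (x + t • d), d⟫_ℝ - ⟪f' x, d⟫_ℝ
        = ⟪f' (x + t • d) - f' x, d⟫_ℝ := (inner_sub_left _ _ _).symm
      _ ≤ ‖f' (x + t • d) - f' x‖ * ‖d‖ := real_inner_le_norm _ _
      _ ≤ L * ‖(x + t • d) - x‖ * ‖d‖ := by gcongr; exact hLip _ _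
      _ = L * t * ‖d‖ ^ 2 := by
        rw [add_sub_cancel_left, norm_smul, Real.norm_of_nonneg ht.1]; ring
  have key := image_le_of_deriv_right_le_deriv_boundary
    (fun t _ => (hφ t).continuousAt.continuousWithinAt) (fun t _ => (hφ t).hasDerivWithinAt)
    (by simp) (fun t _ => (hB t).continuousAt.continuousWithinAt)
    (fun t _ => (hB t).hasDerivWithinAt) hbound (right_mem_Icc.2 zero_le_one)
  simp only [one_smul, one_mul, one_pow, mul_one, d, add_sub_cancel] at key
  linarith

theorem IsMinOn.le_sub_inner_sub_of_prox {g : E → ℝ} {δ : ℝ} (hδ : δ ≠ 0) {x p v : E}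
    (hv : IsMinOn (fun u => g u + 1 / (2 * δ) * ‖(x - δ • p) - u‖ ^ 2) univ v) :
    g v ≤ g x - ⟪p, v - x⟫_ℝ - 1 / (2 * δ) * ‖v - x‖ ^ 2 := by
  have hcmp : g v + 1 / (2 * δ) * ‖(x - δ • p) - v‖ ^ 2
      ≤ g x + 1 / (2 * δ) * ‖(x - δ • p) - x‖ ^ 2 := hv (mem_univ x)
  have hexpand : ‖(x - δ • p) - v‖ ^ 2 - ‖(x - δ • p) - x‖ ^ 2
      = ‖v - x‖ ^ 2 + 2 * δ * ⟪p, v - x⟫_ℝ := by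
    rw [show (x - δ • p) - v = -(v - x) - δ • p by abel, sub_sub_cancel_left, norm_neg,
      norm_sub_sq_real, norm_neg, inner_neg_left, real_inner_smul_right, real_inner_comm]
    ring
  have hscale : 1 / (2 * δ) * (2 * δ) = 1 := by field_simp
  linear_combination hcmp - 1 / (2 * δ) * hexpand - ⟪p, v - x⟫_ℝ * hscale

end

theorem prox_grad_sufficient_decrease_general {n : ℕ}
    (f g : EuclideanSpace ℝ (Fin n) → ℝ)
    (f' : EuclideanSpace ℝ (Fin n) → EuclideanSpace ℝ (Fin n))
    (hf : ∀ x, HasGradientAt f (f' x) x)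
    (L : ℝ) (hLip : ∀ a b, ‖f' a - f' b‖ ≤ L * ‖a - b‖)
    (δ : ℝ) (hδ0 : 0 < δ)
    (x v : EuclideanSpace ℝ (Fin n))
    (hv : IsMinOn (fun u => g u + 1 / (2 * δ) * ‖(x - δ • f' x) - u‖ ^ 2)
      Set.univ v) :
    (f x + g x) - (f v + g v) ≥ (1 / (2 * δ) - L / 2) * ‖v - x‖ ^ 2 := by
  have hf_le := le_add_inner_add_half_mul_sq_of_lipschitz_gradient hf hLip x v
  have hg_le := hv.le_sub_inner_sub_of_prox hδ0.ne'
  linarith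

/-- Sufficient decrease of a proximal gradient step: if `f` has an `L`-Lipschitz
gradient, `g` is convex, `δ ∈ (0, 1/L)` and
`v = prox_{δg}(x − δ∇f(x))`, then
`(f+g)(x) − (f+g)(v) ≥ (1/(2δ) − L/2)‖v − x‖²`. -/
theorem prox_grad_sufficient_decrease {n : ℕ}
    (f g : EuclideanSpace ℝ (Fin n) → ℝ)
    (f' : EuclideanSpace ℝ (Fin n) → EuclideanSpace ℝ (Fin n))
    (hf : ∀ x, HasGradientAt f (f' x) x)
    (L : ℝ) (hL : 0 < L) (hLip : ∀ a b, ‖f' a - f' b‖ ≤ L * ‖a - b‖)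
    (hg : ConvexOn ℝ Set.univ g)
    (δ : ℝ) (hδ0 : 0 < δ) (hδL : δ < 1 / L)
    (x v : EuclideanSpace ℝ (Fin n))
    (hv : IsMinOn (fun u => g u + 1 / (2 * δ) * ‖(x - δ • f' x) - u‖ ^ 2)
      Set.univ v) :
    (f x + g x) - (f v + g v) ≥ (1 / (2 * δ) - L / 2) * ‖v - x‖ ^ 2 :=
  prox_grad_sufficient_decrease_general f g f' hf L hLip δ hδ0 x v hv
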